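/- Let T ∈ ℝ^{n_1×⋯×n_d} have a TT-representation, i.e., a TR-representation with cores G_1,…,G_d, TR-ranks (r_0, r_1, …, r_d) and r_0 = r_d = 1, so that G_1(i_1) ∈ ℝ^{1×r_1}. Let r̃_0 be a divisor of r_1 and write m = r_1/r̃_0. Partition G_1(i_1) = [G_1^{(1)}(i_1), …, G_1^{(r̃_0)}(i_1)] into r̃_0 row blocks of size 1×m, and partition G_2(i_2) vertically into r̃_0 blocks G_2^{(j)}(i_2) ∈ ℝ^{m×r_2}. Define new cores: G̃_1(i_1) ∈ ℝ^{r̃_0×m} obtained by stacking G_1^{(1)}(i_1),…,G_1^{(r̃_0)}(i_1) vertically; G̃_2(i_2) ∈ ℝ^{m×(r̃_0 r_2)} obtained by concatenating G_2^{(1)}(i_2),…,G_2^{(r̃_0)}(i_2) horizontally; and for 3 ≤ k ≤ d, G̃_k(i_k) = the block-diagonal matrix consisting of r̃_0 copies of G_k(i_k), of size (r̃_0 r_{k−1})×(r̃_0 r_k). Then for all indices, Trace(G̃_1(i_1)·G̃_2(i_2)·…·G̃_d(i_d)) = T(i_1,…,i_d); i.e., the cores G̃_k form a TR-representation of T with end-rank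 r̃_0. -/

import Mathlib

/-- Cyclic successor on `Fin d`. -/
def finSucc {d : ℕ} (k : Fin d) : Fin d := ⟨(k.val + 1) % d, Nat.mod_lt _ k.pos⟩

/-- Value of the tensor-ring contraction of cores `G` at the multi-index `i`
(the trace of the product of the core matrices, in index form). -/
def trVal {d : ℕ} (n ρ : Fin d → ℕ)
    (G : ∀ k : Fin d, Fin (n k) → Matrix (Fin (ρ k)) (Fin (ρ (finSucc k))) ℝ)
    (i : ∀ k : Fin d, Fin (n k)) : ℝ :=
  ∑ α : ∀ k : Fin d, Fin (ρ k), ∏ k : Fin d, G k (i k) (α k) (α (finSucc k))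

/-- `(ρ 0, …, ρ (d-1), ρ 0)` is a TR-rank of `T`. -/
def IsTRRank {d : ℕ} (n ρ : Fin d → ℕ) (T : (∀ k : Fin d, Fin (n k)) → ℝ) : Prop :=
  ∃ G : ∀ k : Fin d, Fin (n k) → Matrix (Fin (ρ k)) (Fin (ρ (finSucc k))) ℝ,
    ∀ i, T i = trVal n ρ G i

/-- The `k`-th unfolding matrix of a tensor. -/
def unfold {d : ℕ} (n : Fin d → ℕ) (T : (∀ k : Fin d, Fin (n k)) → ℝ) (k : ℕ) :
    Matrix (∀ j : {j : Fin d // j.val < k}, Fin (n j.val))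
      (∀ j : {j : Fin d // ¬ j.val < k}, Fin (n j.val)) ℝ :=
  Matrix.of fun a b => T (fun j => if h : j.val < k then a ⟨j, h⟩ else b ⟨j, h⟩)

/-- The index `0` of `Fin d`, for `2 ≤ d`. -/
def fin0 {d : ℕ} (hd : 2 ≤ d) : Fin d := ⟨0, by omega⟩

/-- The index `1` of `Fin d`, for `2 ≤ d`. -/
def fin1 {d : ℕ} (hd : 2 ≤ d) : Fin d := ⟨1, by omega⟩

lemma finSucc_fin0 {d : ℕ} (hd : 2 ≤ d) : finSucc (fin0 hd) = fin1 hd := by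
  ext
  show (0 + 1) % d = 1
  exact Nat.mod_eq_of_lt (by omega)


/-!
Write `j = β₁ / m` for the block of an index `β₁ < r0 * m` on edge `1` of the TT-representation.
The summand of the TT contraction at the multi-index `β` reappears in the TR contraction at the
multi-index carrying `β₁ % m` on edge `1` and `β_k` shifted into block `j` on every other edge
(on edge `0`, where `ρ 0 = 1`, this is just `j`). These lifted multi-indices are pairwise
distinct, and every other summand of the TR contraction vanishes: the cores `H_k`, `k ≥ 2`, are
block diagonal, so along a nonzero product the block index cannot change from one edge to the
next, and it comes back to edge `0` unchanged.
-/

open Function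

lemma fin0_ne_fin1 {d : ℕ} (hd : 2 ≤ d) : fin0 hd ≠ fin1 hd := by
  simp [fin0, fin1]

lemma eq_fin0_or_eq_fin1_or_two_le {d : ℕ} (hd : 2 ≤ d) (k : Fin d) :
    k = fin0 hd ∨ k = fin1 hd ∨ 2 ≤ k.val := by
  rcases k with ⟨_ | _ | k, hk⟩
  · exact .inl rfl
  · exact .inr (.inl rfl)
  · exact .inr (.inr (by simp))

lemma finSucc_val_of_lt {d : ℕ} {k : Fin d} (h : k.val + 1 < d) :
    (finSucc k).val = k.val + 1 :=
  Nat.mod_eq_of_lt h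

lemma finSucc_val_of_eq {d : ℕ} {k : Fin d} (h : k.val + 1 = d) : (finSucc k).val = 0 := by
  show (k.val + 1) % d = 0
  rw [h, Nat.mod_self]

lemma finSucc_ne_fin1 {d : ℕ} (hd : 2 ≤ d) {k : Fin d} (hk : 1 ≤ k.val) :
    finSucc k ≠ fin1 hd := by
  intro h
  have h1 : (finSucc k).val = 1 := congrArg Fin.val h
  rcases Nat.lt_or_ge (k.val + 1) d with hlt | hge
  · rw [finSucc_val_of_lt hlt] at h1
    omega
  · rw [finSucc_val_of_eq (by omega)] at h1
    omega

lemma apply_eq_apply_zero_of_finSucc {d a : ℕ} {X : Type*} {f : Fin d → X}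
    (hf : ∀ k : Fin d, a ≤ k.val → f k = f (finSucc k)) (k : Fin d) (hk : a ≤ k.val) :
    f k = f ⟨0, k.pos⟩ := by
  obtain ⟨t, ht⟩ : ∃ t, d - k.val = t := ⟨_, rfl⟩
  induction t generalizing k with
  | zero => have := k.isLt; omega
  | succ t ih =>
    rw [hf k hk]
    rcases Nat.lt_or_ge (k.val + 1) d with hlt | hge
    · have := finSucc_val_of_lt hlt
      exact ih _ (by omega) (by omega)
    · exact congrArg f (Fin.ext (finSucc_val_of_eq (by omega)))

lemma trVal_eq_of_injective {d : ℕ} {n ρ σ : Fin d → ℕ}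
    {G : ∀ k : Fin d, Fin (n k) → Matrix (Fin (ρ k)) (Fin (ρ (finSucc k))) ℝ}
    {H : ∀ k : Fin d, Fin (n k) → Matrix (Fin (σ k)) (Fin (σ (finSucc k))) ℝ}
    (i : ∀ k : Fin d, Fin (n k)) (Φ : (∀ k, Fin (ρ k)) → ∀ k, Fin (σ k)) (hΦ : Injective Φ)
    (hcore : ∀ β k, H k (i k) (Φ β k) (Φ β (finSucc k)) = G k (i k) (β k) (β (finSucc k)))
    (hsupp : ∀ α, (∀ k, H k (i k) (α k) (α (finSucc k)) ≠ 0) → α ∈ Set.range Φ) :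
    trVal n ρ G i = trVal n σ H i := by
  refine Fintype.sum_of_injective Φ hΦ _ _ (fun α hα => ?_) (fun β => by simp only [hcore])
  by_contra hne
  exact hα (hsupp α fun k hk => hne (Finset.prod_eq_zero (Finset.mem_univ k) hk))

lemma blockIndex_lt {d : ℕ} {hd : 2 ≤ d} {ρ : Fin d → ℕ} {r0 m : ℕ}
    (hdiv : ρ (fin1 hd) = r0 * m) (β : ∀ k, Fin (ρ k)) : (β (fin1 hd)).val / m < r0 :=
  Nat.div_lt_of_lt_mul (by rw [mul_comm, ← hdiv]; exact (β _).isLt)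

section LiftIndex

variable {d : ℕ} (hd : 2 ≤ d) {ρ σ : Fin d → ℕ} {r0 m : ℕ}
  (hdiv : ρ (fin1 hd) = r0 * m) (hσ1 : σ (fin1 hd) = m)
  (hσ : ∀ k, k ≠ fin1 hd → σ k = r0 * ρ k)

def liftIndex (β : ∀ k, Fin (ρ k)) (k : Fin d) : Fin (σ k) :=
  if h : k = fin1 hd then
    ⟨(β (fin1 hd)).val % m, by
      subst h
      rw [hσ1]
      refine Nat.mod_lt _ (Nat.pos_of_ne_zero fun hm => ?_)
      simpa [hdiv, hm] using (β (fin1 hd)).isLt⟩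
  else
    ⟨ρ k * ((β (fin1 hd)).val / m) + (β k).val, by
      rw [hσ k h]
      exact Nat.mul_add_lt_mul_of_lt_of_lt (blockIndex_lt hdiv β) (β k).isLt⟩

variable {hd hdiv hσ1 hσ} (β : ∀ k, Fin (ρ k))

lemma liftIndex_val_of_eq {k : Fin d} (hk : k = fin1 hd) :
    (liftIndex hd hdiv hσ1 hσ β k).val = (β (fin1 hd)).val % m := by
  subst hk
  simp [liftIndex]

lemma liftIndex_val_of_ne {k : Fin d} (hk : k ≠ fin1 hd) :
    (liftIndex hd hdiv hσ1 hσ β k).val = ρ k * ((β (fin1 hd)).val / m) + (β k).val := by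
  simp [liftIndex, hk]

lemma liftIndex_div {k : Fin d} (hk : k ≠ fin1 hd) :
    (liftIndex hd hdiv hσ1 hσ β k).val / ρ k = (β (fin1 hd)).val / m := by
  rw [liftIndex_val_of_ne β hk, Nat.mul_add_div (Fin.pos (β k)), Nat.div_eq_of_lt (β k).isLt,
    add_zero]

lemma liftIndex_mod {k : Fin d} (hk : k ≠ fin1 hd) :
    (liftIndex hd hdiv hσ1 hσ β k).val % ρ k = (β k).val := by
  rw [liftIndex_val_of_ne β hk, Nat.mul_add_mod, Nat.mod_eq_of_lt (β k).isLt]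

lemma liftIndex_div_mul_add {k l : Fin d} (hk : k ≠ fin1 hd) (hl : l = fin1 hd) :
    (liftIndex hd hdiv hσ1 hσ β k).val / ρ k * m + (liftIndex hd hdiv hσ1 hσ β l).val =
      (β l).val := by
  subst hl
  rw [liftIndex_div β hk, liftIndex_val_of_eq β rfl, Nat.div_add_mod']

lemma liftIndex_injective : Injective (liftIndex hd hdiv hσ1 hσ (ρ := ρ)) := by
  intro β β' h
  funext k
  ext
  by_cases hk : k = fin1 hd
  · simpa only [liftIndex_div_mul_add _ (fin0_ne_fin1 hd) hk] using
      congrArg (fun α => (α (fin0 hd)).val / ρ (fin0 hd) * m + (α k).val) h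
  · simpa only [liftIndex_mod _ hk] using congrArg (fun α => (α k).val % ρ k) h

lemma mem_range_liftIndex (α : ∀ k, Fin (σ k)) (j : ℕ)
    (hα : ∀ k, k ≠ fin1 hd → (α k).val / ρ k = j) :
    α ∈ Set.range (liftIndex hd hdiv hσ1 hσ) := by
  have hα1 : (α (fin1 hd)).val < m := hσ1 ▸ (α (fin1 hd)).isLt
  have hρ : ∀ k, k ≠ fin1 hd → 0 < ρ k := fun k hk =>
    Nat.pos_of_ne_zero fun h0 => by simpa [hσ k hk, h0] using (α k).isLt
  have hj : j < r0 := by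
    rw [← hα _ (fin0_ne_fin1 hd)]
    exact Nat.div_lt_of_lt_mul (by rw [mul_comm, ← hσ _ (fin0_ne_fin1 hd)]; exact (α _).isLt)
  let β : ∀ k, Fin (ρ k) := fun k =>
    if hk : k = fin1 hd then
      ⟨m * j + (α (fin1 hd)).val, by
        subst hk
        rw [hdiv]
        exact Nat.mul_add_lt_mul_of_lt_of_lt hj hα1⟩
    else ⟨(α k).val % ρ k, Nat.mod_lt _ (hρ k hk)⟩
  have hβ1 : (β (fin1 hd)).val = m * j + (α (fin1 hd)).val := by simp [β]
  refine ⟨β, funext fun k => Fin.ext ?_⟩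
  by_cases hk : k = fin1 hd
  · subst hk
    rw [liftIndex_val_of_eq β rfl, hβ1, Nat.mul_add_mod, Nat.mod_eq_of_lt hα1]
  · have hβk : (β k).val = (α k).val % ρ k := by simp [β, hk]
    rw [liftIndex_val_of_ne β hk, hβ1, Nat.mul_add_div (by omega), Nat.div_eq_of_lt hα1,
      add_zero, hβk, ← hα k hk, Nat.div_add_mod]

lemma mem_range_liftIndex_of_div_finSucc (α : ∀ k, Fin (σ k))
    (hα : ∀ k : Fin d, 2 ≤ k.val → (α k).val / ρ k = (α (finSucc k)).val / ρ (finSucc k)) :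
    α ∈ Set.range (liftIndex hd hdiv hσ1 hσ) := by
  refine mem_range_liftIndex α ((α (fin0 hd)).val / ρ (fin0 hd)) fun k hk => ?_
  rcases eq_fin0_or_eq_fin1_or_two_le hd k with rfl | rfl | h2
  · rfl
  · exact absurd rfl hk
  · exact apply_eq_apply_zero_of_finSucc (f := fun k => (α k).val / ρ k) hα k h2

end LiftIndex

/-- Edge insertion (Algorithm `alg:insert_edge`): given a TT-representation of `T`
(i.e. a TR-representation with end-rank `ρ 0 = 1`) and a divisor `r0` of `ρ 1`, with
`ρ 1 = r0 * m`, the cores `H` obtained by stacking the `r0` blocks of the first core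
vertically, the `r0` blocks of the second core horizontally, and replacing every
remaining core by the block-diagonal matrix consisting of `r0` copies of itself,
form a TR-representation of `T` with TR-ranks `(r0, m, r0·ρ 2, …, r0·ρ (d-1), r0)`. -/
theorem tt_edge_insertion {d : ℕ} (hd : 2 ≤ d) (n ρ : Fin d → ℕ)
    (hρ0 : ρ (fin0 hd) = 1)
    (G : ∀ k : Fin d, Fin (n k) → Matrix (Fin (ρ k)) (Fin (ρ (finSucc k))) ℝ)
    (T : (∀ k : Fin d, Fin (n k)) → ℝ)
    (hT : ∀ i, T i = trVal n ρ G i)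
    (r0 m : ℕ) (hdiv : ρ (fin1 hd) = r0 * m)
    (σ : Fin d → ℕ)
    (hσ0 : σ (fin0 hd) = r0) (hσ1 : σ (fin1 hd) = m)
    (hσmid : ∀ k : Fin d, 2 ≤ k.val → σ k = r0 * ρ k)
    (H : ∀ k : Fin d, Fin (n k) → Matrix (Fin (σ k)) (Fin (σ (finSucc k))) ℝ)
    -- the first new core stacks the `r0` blocks of the first core vertically:
    (hH0 : ∀ (i : Fin (n (fin0 hd))) (x : Fin (σ (fin0 hd)))
        (y : Fin (σ (finSucc (fin0 hd)))),
      H (fin0 hd) i x y =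
        G (fin0 hd) i ⟨0, by rw [hρ0]; omega⟩
          ⟨x.val * m + y.val, by
            have h1 : ρ (finSucc (fin0 hd)) = r0 * m := by
              rw [finSucc_fin0 hd]; exact hdiv
            have h2 : σ (finSucc (fin0 hd)) = m := by
              rw [finSucc_fin0 hd]; exact hσ1
            have hx : x.val < r0 := by omega
            have hy : y.val < m := by omega
            calc x.val * m + y.val < (x.val + 1) * m := by
                  rw [Nat.add_mul, Nat.one_mul]; omega
              _ ≤ r0 * m := Nat.mul_le_mul hx (le_refl m)
              _ = ρ (finSucc (fin0 hd)) := h1.symm⟩)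
    -- the second new core stacks the `r0` blocks of the second core horizontally:
    (hH1 : ∀ (i : Fin (n (fin1 hd))) (x : Fin (σ (fin1 hd)))
        (y : Fin (σ (finSucc (fin1 hd)))),
      H (fin1 hd) i x y =
        G (fin1 hd) i
          ⟨(y.val / ρ (finSucc (fin1 hd))) * m + x.val, by
            have hx : x.val < m := by
              have := x.isLt; omega
            have hq : y.val / ρ (finSucc (fin1 hd)) < r0 := by
              rcases Nat.lt_or_ge (2 : ℕ) d with h3 | h3
              · have hval : (finSucc (fin1 hd)).val = 2 := by
                  show (1 + 1) % d = 2
                  exact Nat.mod_eq_of_lt (by omega)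
                have hs : σ (finSucc (fin1 hd)) = r0 * ρ (finSucc (fin1 hd)) :=
                  hσmid _ (by omega)
                have hy := y.isLt
                have hpos : 0 < ρ (finSucc (fin1 hd)) := by
                  rcases Nat.eq_zero_or_pos (ρ (finSucc (fin1 hd))) with h0 | h0
                  · rw [h0, Nat.mul_zero] at hs; omega
                  · exact h0
                have hy' : y.val < r0 * ρ (finSucc (fin1 hd)) := by omega
                exact (Nat.div_lt_iff_lt_mul hpos).mpr hy'
              · have hd2 : d = 2 := by omega
                have hfs : finSucc (fin1 hd) = fin0 hd := by
                  ext
                  show (1 + 1) % d = 0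
                  rw [hd2]
                have h1 : ρ (finSucc (fin1 hd)) = 1 := by rw [hfs]; exact hρ0
                have hsy : σ (finSucc (fin1 hd)) = r0 := by rw [hfs]; exact hσ0
                have hy := y.isLt
                rw [h1, Nat.div_one]
                omega
            calc (y.val / ρ (finSucc (fin1 hd))) * m + x.val
                < (y.val / ρ (finSucc (fin1 hd)) + 1) * m := by
                  rw [Nat.add_mul, Nat.one_mul]; omega
              _ ≤ r0 * m := Nat.mul_le_mul hq (le_refl m)
              _ = ρ (fin1 hd) := hdiv.symm⟩
          ⟨y.val % ρ (finSucc (fin1 hd)), by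
            apply Nat.mod_lt
            rcases Nat.lt_or_ge (2 : ℕ) d with h3 | h3
            · have hval : (finSucc (fin1 hd)).val = 2 := by
                show (1 + 1) % d = 2
                exact Nat.mod_eq_of_lt (by omega)
              have hs : σ (finSucc (fin1 hd)) = r0 * ρ (finSucc (fin1 hd)) :=
                hσmid _ (by omega)
              have hy := y.isLt
              rcases Nat.eq_zero_or_pos (ρ (finSucc (fin1 hd))) with h0 | h0
              · rw [h0, Nat.mul_zero] at hs; omega
              · exact h0
            · have hd2 : d = 2 := by omega
              have hfs : finSucc (fin1 hd) = fin0 hd := by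
                ext
                show (1 + 1) % d = 0
                rw [hd2]
              have h1 : ρ (finSucc (fin1 hd)) = 1 := by rw [hfs]; exact hρ0
              omega⟩)
    -- every remaining new core is block-diagonal with `r0` copies of the old core:
    (hHmid : ∀ (k : Fin d) (hk : 2 ≤ k.val) (i : Fin (n k)) (x : Fin (σ k))
        (y : Fin (σ (finSucc k))),
      H k i x y =
        if x.val / ρ k = y.val / ρ (finSucc k) then
          G k i
            ⟨x.val % ρ k, by
              apply Nat.mod_lt
              have hs : σ k = r0 * ρ k := hσmid k hk
              have hx := x.isLt
              rcases Nat.eq_zero_or_pos (ρ k) with h0 | h0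
              · rw [h0, Nat.mul_zero] at hs; omega
              · exact h0⟩
            ⟨y.val % ρ (finSucc k), by
              apply Nat.mod_lt
              rcases Nat.lt_or_ge (k.val + 1) d with h' | h'
              · have hval : (finSucc k).val = k.val + 1 := Nat.mod_eq_of_lt h'
                have hs : σ (finSucc k) = r0 * ρ (finSucc k) := hσmid _ (by omega)
                have hy := y.isLt
                rcases Nat.eq_zero_or_pos (ρ (finSucc k)) with h0 | h0
                · rw [h0, Nat.mul_zero] at hs; omega
                · exact h0
              · have he : k.val + 1 = d := by have := k.isLt; omega
                have hfs : finSucc k = fin0 hd := by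
                  ext
                  show (k.val + 1) % d = 0
                  rw [he, Nat.mod_self]
                have h1 : ρ (finSucc k) = 1 := by rw [hfs]; exact hρ0
                omega⟩
        else 0) :
    ∀ i, T i = trVal n σ H i := by
  intro i
  rw [hT i]
  have hσ : ∀ k, k ≠ fin1 hd → σ k = r0 * ρ k := by
    intro k hk
    rcases eq_fin0_or_eq_fin1_or_two_le hd k with rfl | rfl | h2
    · rw [hσ0, hρ0, mul_one]
    · exact absurd rfl hk
    · exact hσmid k h2
  refine trVal_eq_of_injective i (liftIndex hd hdiv hσ1 hσ) liftIndex_injective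
    (fun β k => ?_) (fun α hα => mem_range_liftIndex_of_div_finSucc α fun k hk => ?_)
  · rcases eq_fin0_or_eq_fin1_or_two_le hd k with rfl | rfl | hk
    · rw [hH0]
      congr 1 <;> ext
      · have := (β (fin0 hd)).isLt
        omega
      · simpa only [hρ0, Nat.div_one] using
          liftIndex_div_mul_add β (fin0_ne_fin1 hd) (finSucc_fin0 hd)
    · have hs1 := finSucc_ne_fin1 hd (k := fin1 hd) le_rfl
      rw [hH1]
      congr 1 <;> ext
      · exact liftIndex_div_mul_add β hs1 rfl
      · exact liftIndex_mod β hs1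
    · have hk1 : k ≠ fin1 hd := by
        rintro rfl
        simp [fin1] at hk
      have hs1 := finSucc_ne_fin1 hd (k := k) (by omega)
      rw [hHmid k hk, if_pos (by rw [liftIndex_div β hk1, liftIndex_div β hs1])]
      congr 1 <;> ext
      · exact liftIndex_mod β hk1
      · exact liftIndex_mod β hs1
  · by_contra hne
    exact hα k (by rw [hHmid k hk, if_neg hne])
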